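/- Let g = (g_1,…,g_m) be a tuple of polynomials in ℝ[X_1,…,X_n] and let C be a compact subset of S(g) such that, for each i ∈ {1,…,m}, g_i is strictly quasiconcave on C ∩ Z(g_i). Then there exists a univariate polynomial h ∈ ℝ[T] with h − 1 a sum of squares in ℝ[T] such that, setting h_i := g_i · h(g_i) ∈ ℝ[X_1,…,X_n], the matrix ∫_0^1 (Hess h_i)(u + s(x − u)) ds is negative definite for all i ∈ {1,…,m}, all u ∈ Z(g_i) and all x ∈ ℝ^n with {u + s(x − u) : 0 ≤ s ≤ 1} ⊆ C. -/

import Mathlib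

/-!
Take `h(t) = 2 ∑_{j ≤ 2r} (1 - t/K)^j`, so that
`h - 1 = ∑_{j < r} ((1 - t/K)^j (2 - t/K))² + (1 - t/K)^{2r}` and
`φ(t) := t h(t) = 2K (1 - (1 - t/K)^{2r+1})`. Then `h_i = φ(g_i)`,
`vᵀ (Hess h_i) v = φ''(g_i) (∇g_i · v)² + φ'(g_i) vᵀ (Hess g_i) v`, and on `[0, K]`
we have `φ' = 2(2r+1)(1 - t/K)^{2r} ≥ 0` and `φ'' ≤ -(2r/K) φ'`.

By compactness and strict quasiconcavity there is `μ > 0` such that at points of `C` where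
`g_i < μ`, for unit `v`, either `vᵀ (Hess g_i) v ≤ -μ` or `(∇g_i · v)² ≥ μ`. Once `2r/K` is large,
the integrand is therefore at most `-μ φ'(g_i)` there, and at most `B φ'(μ)` elsewhere, where `B`
bounds `vᵀ (Hess g_i) v` on `C`. By uniform continuity, a segment starting on `Z(g_i)` stays in
`{g_i ≤ μ/2}` for a length `s₀` that does not depend on the segment. Finally
`φ'(μ) / φ'(μ/2) ≤ (1 - μ/(2K))^{2r} ≤ exp(-μr/K)` is small when `r/K` is large, while `K` can
still be taken larger than every value of the `g_i` on `C`.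
-/

open MvPolynomial Matrix

noncomputable section

/-- `S(g) = {x ∈ ℝⁿ : g₁(x) ≥ 0, …, g_m(x) ≥ 0}`. -/
def SolSet {n m : ℕ} (g : Fin m → MvPolynomial (Fin n) ℝ) : Set (Fin n → ℝ) :=
  {x | ∀ i, 0 ≤ eval x (g i)}

/-- The real zero set `Z(p)` of a polynomial `p`. -/
def ZSet {n : ℕ} (p : MvPolynomial (Fin n) ℝ) : Set (Fin n → ℝ) :=
  {x | eval x p = 0}

/-- The gradient `∇g(x)` of a polynomial `g` at a point `x`. -/
def gradEval {n : ℕ} (g : MvPolynomial (Fin n) ℝ) (x : Fin n → ℝ) : Fin n → ℝ :=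
  fun i => eval x (pderiv i g)

/-- The Hessian `(Hess g)(x)` of a polynomial `g` at a point `x`. -/
def hessEval {n : ℕ} (g : MvPolynomial (Fin n) ℝ) (x : Fin n → ℝ) :
    Matrix (Fin n) (Fin n) ℝ :=
  Matrix.of fun i j => eval x (pderiv i (pderiv j g))

/-- `g` is strictly quasiconcave at `x`: `vᵀ (Hess g(x)) v < 0` for every `v ≠ 0`
orthogonal to `∇g(x)`. -/
def StrictlyQuasiconcaveAt {n : ℕ} (g : MvPolynomial (Fin n) ℝ) (x : Fin n → ℝ) : Prop :=
  ∀ v : Fin n → ℝ, v ≠ 0 → gradEval g x ⬝ᵥ v = 0 → v ⬝ᵥ (hessEval g x) *ᵥ v < 0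

/-- A univariate polynomial is a sum of squares. -/
def IsSOS1 (p : Polynomial ℝ) : Prop :=
  ∃ (l : ℕ) (q : Fin l → Polynomial ℝ), p = ∑ i, q i ^ 2

open Filter Topology Set

theorem two_mul_geom_sum_sub_one {R : Type*} [CommRing R] (y : R) (r : ℕ) :
    2 * ∑ j ∈ Finset.range (2 * r + 1), y ^ j - 1
      = ∑ j ∈ Finset.range r, (y ^ j * (1 + y)) ^ 2 + (y ^ r) ^ 2 := by
  induction r with
  | zero => norm_num
  | succ r ih =>
    have hsum : ∑ j ∈ Finset.range (2 * (r + 1) + 1), y ^ j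
        = ∑ j ∈ Finset.range (2 * r + 1), y ^ j + y ^ (2 * r + 1) + y ^ (2 * r + 2) := by
      rw [show 2 * (r + 1) + 1 = 2 * r + 1 + 1 + 1 by ring, Finset.sum_range_succ,
        Finset.sum_range_succ]
    rw [hsum, Finset.sum_range_succ (fun j => (y ^ j * (1 + y)) ^ 2)]
    linear_combination ih

namespace Polynomial

def geomWeight (K : ℝ) (r : ℕ) : ℝ[X] :=
  2 * ∑ j ∈ Finset.range (2 * r + 1), (1 - C K⁻¹ * X) ^ j

theorem isSOS1_geomWeight_sub_one (K : ℝ) (r : ℕ) : IsSOS1 (geomWeight K r - 1) := by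
  refine ⟨r + 1, Fin.snoc (fun j : Fin r => (1 - C K⁻¹ * X) ^ (j : ℕ) * (2 - C K⁻¹ * X))
    ((1 - C K⁻¹ * X) ^ r), ?_⟩
  rw [geomWeight, two_mul_geom_sum_sub_one, Fin.sum_univ_castSucc, Finset.sum_range]
  simp only [Fin.snoc_castSucc, Fin.snoc_last]
  congr! 3
  ring

theorem derivative_X_mul_geomWeight {K : ℝ} (hK : K ≠ 0) (r : ℕ) :
    derivative (X * geomWeight K r) = C (2 * (2 * (r : ℝ) + 1)) * (1 - C K⁻¹ * X) ^ (2 * r) := by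
  have hX : (X : ℝ[X]) = C K * (1 - (1 - C K⁻¹ * X)) := by
    rw [sub_sub_cancel, ← mul_assoc, ← C_mul, mul_inv_cancel₀ hK, C_1, one_mul]
  have hφ : X * geomWeight K r = C (2 * K) * (1 - (1 - C K⁻¹ * X) ^ (2 * r + 1)) := by
    rw [geomWeight, ← mul_neg_geom_sum]
    set S := ∑ j ∈ Finset.range (2 * r + 1), (1 - C K⁻¹ * X) ^ j
    rw [C_mul, C_ofNat]
    linear_combination (2 * S) * hX
  have hc : 2 * K * ((2 * r + 1 : ℕ) : ℝ) * K⁻¹ = 2 * (2 * r + 1) := by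
    field_simp
    push_cast
    ring
  rw [hφ, mul_sub, mul_one, derivative_sub, derivative_C, derivative_C_mul, derivative_pow,
    derivative_sub, derivative_one, derivative_C_mul, derivative_X, Nat.add_sub_cancel, ← hc]
  simp only [C_mul]
  ring

theorem eval_derivative_X_mul_geomWeight {K : ℝ} (hK : K ≠ 0) (r : ℕ) (t : ℝ) :
    (derivative (X * geomWeight K r)).eval t = 2 * (2 * r + 1) * (1 - t / K) ^ (2 * r) := by
  simp [derivative_X_mul_geomWeight hK, div_eq_inv_mul]

theorem eval_derivative_derivative_X_mul_geomWeight {K : ℝ} (hK : K ≠ 0) (r : ℕ) (t : ℝ) :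
    (derivative (derivative (X * geomWeight K r))).eval t
      = -(2 * r / K) * (2 * (2 * r + 1) * (1 - t / K) ^ (2 * r - 1)) := by
  rw [derivative_X_mul_geomWeight hK, derivative_C_mul, derivative_pow, derivative_sub,
    derivative_one, derivative_C_mul, derivative_X]
  simp only [eval_mul, eval_C, eval_pow, eval_sub, eval_one, eval_X, zero_sub, eval_neg, mul_one]
  push_cast
  ring

variable {K : ℝ} (r : ℕ) {t : ℝ}

theorem eval_derivative_X_mul_geomWeight_nonneg (hK : K ≠ 0) (t : ℝ) :
    0 ≤ (derivative (X * geomWeight K r)).eval t := by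
  rw [eval_derivative_X_mul_geomWeight hK]
  exact mul_nonneg (by positivity) (Even.pow_nonneg (even_two_mul r) _)

theorem eval_derivative_derivative_X_mul_geomWeight_le (hK : 0 < K) (ht₀ : 0 ≤ t)
    (htK : t ≤ K) :
    (derivative (derivative (X * geomWeight K r))).eval t
      ≤ -(2 * r / K) * (derivative (X * geomWeight K r)).eval t := by
  rw [eval_derivative_X_mul_geomWeight hK.ne', eval_derivative_derivative_X_mul_geomWeight hK.ne']
  have hy₀ : 0 ≤ 1 - t / K := by rw [sub_nonneg, div_le_one hK]; exact htK
  have hy₁ : 1 - t / K ≤ 1 := by linarith [div_nonneg ht₀ hK.le]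
  refine mul_le_mul_of_nonpos_left ?_ (by rw [neg_nonpos]; positivity)
  exact mul_le_mul_of_nonneg_left (pow_le_pow_of_le_one hy₀ hy₁ (Nat.sub_le _ _)) (by positivity)

theorem le_eval_derivative_X_mul_geomWeight {μ : ℝ} (hK : 0 < K) (hμK : μ ≤ 2 * K)
    (ht : t ≤ μ / 2) :
    2 * (2 * r + 1) * (1 - μ / (2 * K)) ^ (2 * r)
      ≤ (derivative (X * geomWeight K r)).eval t := by
  rw [eval_derivative_X_mul_geomWeight hK.ne']
  refine mul_le_mul_of_nonneg_left (pow_le_pow_left₀ ?_ ?_ _) (by positivity)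
  · rw [sub_nonneg, div_le_one (by positivity)]; exact hμK
  · have : t / K ≤ μ / 2 / K := by gcongr
    rw [div_div] at this
    linarith

theorem eval_derivative_X_mul_geomWeight_le {μ : ℝ} (hK : 0 < K) (hμt : μ ≤ t) (htK : t ≤ K) :
    (derivative (X * geomWeight K r)).eval t
      ≤ 2 * (2 * r + 1) * ((1 - μ / (2 * K)) ^ (2 * r)) ^ 2 := by
  rw [eval_derivative_X_mul_geomWeight hK.ne', ← pow_mul, mul_comm (2 * r),
    pow_mul (1 - μ / (2 * K)) 2]
  refine mul_le_mul_of_nonneg_left (pow_le_pow_left₀ ?_ ?_ _) (by positivity)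
  · rw [sub_nonneg, div_le_one hK]; exact htK
  · have : μ / K ≤ t / K := by gcongr
    nlinarith [sq_nonneg (μ / (2 * K)), show μ / (2 * K) * 2 = μ / K by field_simp]

end Polynomial

theorem exists_geomWeight_params {μ B R s₀ : ℝ} (hμ : 0 < μ) (hB : 0 ≤ B) (hs₀ : 0 < s₀) :
    ∃ (r : ℕ) (K : ℝ), max R μ < K ∧ (B + μ) / μ ≤ 2 * r / K ∧
      B * (1 - μ / (2 * K)) ^ (2 * r) < μ * s₀ := by
  set c := (B + μ) / μ + 2 * B / (μ ^ 2 * s₀) with hc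
  have hc₁ : 1 ≤ (B + μ) / μ := by rw [le_div_iff₀ hμ]; linarith
  have hc₂ : 0 ≤ 2 * B / (μ ^ 2 * s₀) := by positivity
  have hc₀ : 0 < c := by linarith
  obtain ⟨r, hr⟩ := exists_nat_gt (c * max R μ / 2)
  have hRμ : μ ≤ max R μ := le_max_right _ _
  have hr₀ : (0 : ℝ) < r := lt_trans (by positivity) hr
  set K := 2 * r / c with hK
  have hK₀ : 0 < K := by positivity
  have hcK : 2 * r / K = c := by rw [hK]; field_simp
  refine ⟨r, K, ?_, by rw [hcK]; linarith, ?_⟩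
  · rw [hK, lt_div_iff₀ hc₀]; linarith
  have hμK : μ < K := by rw [hK, lt_div_iff₀ hc₀]; nlinarith
  have hpow : (1 - μ / (2 * K)) ^ (2 * r) ≤ Real.exp (-(μ * c / 2)) := by
    calc (1 - μ / (2 * K)) ^ (2 * r) ≤ Real.exp (-(μ / (2 * K))) ^ (2 * r) := by
          refine pow_le_pow_left₀ ?_ ?_ _
          · rw [sub_nonneg, div_le_one (by positivity)]; linarith
          · linarith [Real.add_one_le_exp (-(μ / (2 * K)))]
      _ = Real.exp (-(μ * c / 2)) := by
          rw [← Real.exp_nat_mul, ← hcK]; push_cast; field_simp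
  have hexp : B < μ * s₀ * Real.exp (μ * c / 2) := by
    have h₁ := Real.add_one_le_exp (μ * c / 2)
    have h₂ : B ≤ μ * s₀ * (μ * c / 2) := by
      have : μ * s₀ * (μ * c / 2) = μ * s₀ * (B + μ) / 2 + B := by rw [hc]; field_simp
      rw [this]
      linarith [show 0 ≤ μ * s₀ * (B + μ) / 2 by positivity]
    nlinarith [mul_pos hμ hs₀]
  calc B * (1 - μ / (2 * K)) ^ (2 * r) ≤ B * Real.exp (-(μ * c / 2)) :=
        mul_le_mul_of_nonneg_left hpow hB
    _ < μ * s₀ := by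
        rw [Real.exp_neg, ← div_eq_mul_inv, div_lt_iff₀ (Real.exp_pos _)]
        exact hexp

theorem continuous_gradEval {n : ℕ} (p : MvPolynomial (Fin n) ℝ) : Continuous (gradEval p) :=
  continuous_pi fun _ => continuous_eval _

theorem continuous_hessEval {n : ℕ} (p : MvPolynomial (Fin n) ℝ) : Continuous (hessEval p) :=
  continuous_matrix fun _ _ => continuous_eval _

theorem eval_aeval_eq_eval {n : ℕ} (p : MvPolynomial (Fin n) ℝ) (F : Polynomial ℝ)
    (y : Fin n → ℝ) : eval y (Polynomial.aeval p F) = F.eval (eval y p) := by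
  simpa [coe_aeval_eq_eval, Polynomial.coe_aeval_eq_eval] using
    (Polynomial.aeval_algHom_apply (MvPolynomial.aeval y) p F).symm

theorem hessEval_aeval {n : ℕ} (p : MvPolynomial (Fin n) ℝ) (F : Polynomial ℝ)
    (y : Fin n → ℝ) :
    hessEval (Polynomial.aeval p F) y
      = (F.derivative.derivative.eval (eval y p)) • vecMulVec (gradEval p y) (gradEval p y)
        + (F.derivative.eval (eval y p)) • hessEval p y := by
  ext a b
  simp only [hessEval, gradEval, of_apply, Derivation.map_aeval, smul_eq_mul, pderiv_mul,
    eval_add, eval_mul, eval_aeval_eq_eval, Matrix.add_apply, Matrix.smul_apply, vecMulVec_apply]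
  ring

theorem dotProduct_hessEval_aeval_mulVec {n : ℕ} (p : MvPolynomial (Fin n) ℝ)
    (F : Polynomial ℝ) (y v : Fin n → ℝ) :
    v ⬝ᵥ hessEval (Polynomial.aeval p F) y *ᵥ v
      = F.derivative.derivative.eval (eval y p) * (gradEval p y ⬝ᵥ v) ^ 2
        + F.derivative.eval (eval y p) * (v ⬝ᵥ hessEval p y *ᵥ v) := by
  rw [hessEval_aeval, add_mulVec, smul_mulVec, smul_mulVec, vecMulVec_mulVec, dotProduct_add,
    dotProduct_smul, dotProduct_smul, op_smul_eq_smul, dotProduct_smul, dotProduct_comm v]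
  simp only [smul_eq_mul]
  ring

theorem dotProduct_integral_mulVec {ι : Type*} [Fintype ι] {M : ℝ → Matrix ι ι ℝ}
    (hM : Continuous M) (α β : ℝ) (v : ι → ℝ) :
    v ⬝ᵥ (of fun a b => ∫ s in α..β, M s a b) *ᵥ v = ∫ s in α..β, v ⬝ᵥ M s *ᵥ v := by
  simp only [dotProduct, mulVec, of_apply]
  rw [intervalIntegral.integral_finsetSum fun a _ =>
    Continuous.intervalIntegrable (by fun_prop) _ _]
  refine Finset.sum_congr rfl fun a _ => ?_
  rw [intervalIntegral.integral_const_mul, intervalIntegral.integral_finsetSum fun b _ =>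
    Continuous.intervalIntegrable (by fun_prop) _ _]
  simp only [intervalIntegral.integral_mul_const]

theorem dotProduct_mulVec_neg_of_norm_eq_one {ι : Type*} [Fintype ι] {M : Matrix ι ι ℝ}
    (hM : ∀ w : ι → ℝ, ‖w‖ = 1 → w ⬝ᵥ M *ᵥ w < 0) {v : ι → ℝ} (hv : v ≠ 0) :
    v ⬝ᵥ M *ᵥ v < 0 := by
  have h := hM (‖v‖⁻¹ • v) (norm_smul_inv_norm hv)
  rw [mulVec_smul, smul_dotProduct, dotProduct_smul, smul_smul, smul_eq_mul] at h
  exact neg_of_mul_neg_right h (by positivity)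

theorem dotProduct_integral_hessEval_mulVec {n : ℕ} (P : MvPolynomial (Fin n) ℝ)
    {γ : ℝ → Fin n → ℝ} (hγ : Continuous γ) (α β : ℝ) (v : Fin n → ℝ) :
    v ⬝ᵥ (of fun a b => ∫ s in α..β, eval (γ s) (pderiv a (pderiv b P))) *ᵥ v
      = ∫ s in α..β, v ⬝ᵥ hessEval P (γ s) *ᵥ v :=
  dotProduct_integral_mulVec ((continuous_hessEval P).comp hγ) α β v

theorem lineMap_eq {n : ℕ} (u x : Fin n → ℝ) (s : ℝ) :
    AffineMap.lineMap u x s = fun j => u j + s * (x j - u j) := by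
  ext j
  simp only [AffineMap.lineMap_apply_module, Pi.add_apply, Pi.smul_apply, smul_eq_mul]
  ring

theorem IsCompact.eventually_forall_le {X : Type*} [TopologicalSpace X] {K : Set X}
    {f : X → ℝ} (hK : IsCompact K) (hf : ContinuousOn f K) :
    ∀ᶠ B in atTop, ∀ x ∈ K, f x ≤ B := by
  obtain ⟨B₀, hB₀⟩ := hK.bddAbove_image hf
  filter_upwards [eventually_ge_atTop B₀] with B hB x hx using (hB₀ ⟨x, hx, rfl⟩).trans hB

theorem IsCompact.eventually_nhdsGT_forall_le {X : Type*} [TopologicalSpace X] {K : Set X}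
    {f : X → ℝ} (hK : IsCompact K) (hf : ContinuousOn f K) (hpos : ∀ x ∈ K, 0 < f x) :
    ∀ᶠ μ in 𝓝[>] 0, ∀ x ∈ K, μ ≤ f x := by
  obtain ⟨a, ha, hle⟩ := hK.exists_forall_le' hf hpos
  filter_upwards [Ioo_mem_nhdsGT ha] with μ hμ x hx using hμ.2.le.trans (hle x hx)

theorem IsCompact.eventually_dist_lineMap_lt {E Y : Type*} [NormedAddCommGroup E]
    [NormedSpace ℝ E] [PseudoMetricSpace Y] {K : Set E} {f : E → Y} (hK : IsCompact K)
    (hf : ContinuousOn f K) {ε : ℝ} (hε : 0 < ε) :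
    ∀ᶠ s₀ in 𝓝[>] (0 : ℝ), ∀ u ∈ K, ∀ x ∈ K, ∀ s ∈ Icc 0 s₀, AffineMap.lineMap u x s ∈ K →
      dist (f (AffineMap.lineMap u x s)) (f u) < ε := by
  obtain ⟨ρ, hρ, hfρ⟩ := Metric.uniformContinuousOn_iff.1
    (hK.uniformContinuousOn_of_continuous hf) ε hε
  obtain ⟨d, hd⟩ := Metric.isBounded_iff.1 hK.isBounded
  have hd1 : 0 < |d| + 1 := by positivity
  filter_upwards [Ioo_mem_nhdsGT (div_pos hρ hd1)] with s₀ hs₀ u hu x hx s hs hsK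
  refine hfρ _ hsK u hu ?_
  rw [dist_lineMap_left, Real.norm_eq_abs, abs_of_nonneg hs.1]
  calc s * dist u x ≤ s₀ * (|d| + 1) :=
        mul_le_mul hs.2 ((hd hu hx).trans ((le_abs_self d).trans (le_add_of_nonneg_right
          zero_le_one))) dist_nonneg (hs.1.trans hs.2)
    _ < ρ := (lt_div_iff₀ hd1).1 hs₀.2

theorem StrictlyQuasiconcaveAt.zero_lt_max {n : ℕ} {p : MvPolynomial (Fin n) ℝ}
    {y v : Fin n → ℝ} (hp : StrictlyQuasiconcaveAt p y) (hv : v ≠ 0) :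
    0 < max (-(v ⬝ᵥ hessEval p y *ᵥ v)) ((gradEval p y ⬝ᵥ v) ^ 2) := by
  by_cases hgrad : gradEval p y ⬝ᵥ v = 0
  · exact lt_max_of_lt_left (neg_pos.2 (hp v hv hgrad))
  · exact lt_max_of_lt_right (by positivity)

theorem eventually_quasiconcavity_margin {n : ℕ} (p : MvPolynomial (Fin n) ℝ)
    {C : Set (Fin n → ℝ)} (hC : IsCompact C) (hp : ∀ y ∈ C, 0 ≤ eval y p)
    (hqc : ∀ y ∈ C ∩ ZSet p, StrictlyQuasiconcaveAt p y) :
    ∀ᶠ μ in 𝓝[>] 0, ∀ y ∈ C, ∀ v : Fin n → ℝ, ‖v‖ = 1 → eval y p < μ →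
      μ ≤ max (-(v ⬝ᵥ hessEval p y *ᵥ v)) ((gradEval p y ⬝ᵥ v) ^ 2) := by
  have hcont : Continuous fun yv : (Fin n → ℝ) × (Fin n → ℝ) =>
      max (max (-(yv.2 ⬝ᵥ hessEval p yv.1 *ᵥ yv.2)) ((gradEval p yv.1 ⬝ᵥ yv.2) ^ 2))
        (eval yv.1 p) :=
    ((continuous_snd.dotProduct (((continuous_hessEval p).comp continuous_fst).matrix_mulVec
      continuous_snd)).neg.max ((((continuous_gradEval p).comp continuous_fst).dotProduct
        continuous_snd).pow 2)).max ((continuous_eval p).comp continuous_fst)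
  have hmargin := (hC.prod (isCompact_sphere (0 : Fin n → ℝ) 1)).eventually_nhdsGT_forall_le
    hcont.continuousOn ?_
  · exact hmargin.mono fun μ h y hy v hv hyμ =>
      (le_max_iff.1 (h (y, v) ⟨hy, by simpa using hv⟩)).resolve_right (not_le.2 hyμ)
  rintro ⟨y, v⟩ ⟨hy, hv⟩
  have hv0 : v ≠ 0 := by rintro rfl; simp at hv
  rcases (hp y hy).lt_or_eq with hpos | hzero
  · exact lt_max_of_lt_right hpos
  · exact lt_max_of_lt_left ((hqc y ⟨hy, hzero.symm⟩).zero_lt_max hv0)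

theorem eventually_quadForm_hessEval_le {n : ℕ} (p : MvPolynomial (Fin n) ℝ)
    {C : Set (Fin n → ℝ)} (hC : IsCompact C) :
    ∀ᶠ B in atTop, ∀ y ∈ C, ∀ v : Fin n → ℝ, ‖v‖ = 1 → v ⬝ᵥ hessEval p y *ᵥ v ≤ B :=
  ((hC.prod (isCompact_sphere (0 : Fin n → ℝ) 1)).eventually_forall_le
    (f := fun yv => yv.2 ⬝ᵥ hessEval p yv.1 *ᵥ yv.2) (continuous_snd.dotProduct
      (((continuous_hessEval p).comp continuous_fst).matrix_mulVec
        continuous_snd)).continuousOn).mono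
    fun _ h y hy v hv => h (y, v) ⟨hy, by simpa using hv⟩

theorem intervalIntegral_neg_of_le {J : ℝ → ℝ} (hJ : Continuous J) {s₀ a b : ℝ}
    (hs₀ : s₀ ∈ Icc (0 : ℝ) 1) (hnear : ∀ s ∈ Icc 0 s₀, J s ≤ -a)
    (hfar : ∀ s ∈ Icc s₀ 1, J s ≤ b) (hab : b * (1 - s₀) < a * s₀) :
    ∫ s in (0 : ℝ)..1, J s < 0 := by
  have hJi (α β : ℝ) : IntervalIntegrable J MeasureTheory.volume α β := hJ.intervalIntegrable _ _
  have h₁ := intervalIntegral.integral_mono_on hs₀.1 (hJi _ _)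
    (intervalIntegrable_const (c := -a)) hnear
  have h₂ := intervalIntegral.integral_mono_on hs₀.2 (hJi _ _)
    (intervalIntegrable_const (c := b)) hfar
  rw [intervalIntegral.integral_const, smul_eq_mul] at h₁ h₂
  rw [← intervalIntegral.integral_add_adjacent_intervals (hJi 0 s₀) (hJi s₀ 1)]
  linarith

theorem quadForm_le_of_margin {d₁ d₂ c μ B Q W : ℝ} (hd₁ : 0 ≤ d₁) (hd₂ : d₂ ≤ -c * d₁)
    (hc : 0 ≤ c) (hW : 0 ≤ W) (hQ : Q ≤ B) (hcμ : B + μ ≤ c * μ) (hm : μ ≤ max (-Q) W) :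
    d₂ * W + d₁ * Q ≤ -μ * d₁ := by
  have hd₂W : d₂ * W ≤ -c * d₁ * W := mul_le_mul_of_nonneg_right hd₂ hW
  rcases le_max_iff.1 hm with hQμ | hWμ
  · nlinarith [mul_nonneg (mul_nonneg hc hd₁) hW, mul_le_mul_of_nonneg_left hQμ hd₁]
  · have hQ' : Q ≤ c * W - μ := by nlinarith [mul_le_mul_of_nonneg_left hWμ hc]
    nlinarith [mul_le_mul_of_nonneg_left hQ' hd₁]

section SegmentEstimate

open Polynomial (derivative geomWeight)

variable {n : ℕ} {p : MvPolynomial (Fin n) ℝ} {y w : Fin n → ℝ} {μ B K : ℝ} {r : ℕ}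

theorem quadForm_hessEval_aeval_le_of_margin (hK : 0 < K) (hμ : 0 < μ)
    (hr : (B + μ) / μ ≤ 2 * r / K) (hy₀ : 0 ≤ eval y p) (hyK : eval y p ≤ K)
    (hQ : w ⬝ᵥ hessEval p y *ᵥ w ≤ B)
    (hm : μ ≤ max (-(w ⬝ᵥ hessEval p y *ᵥ w)) ((gradEval p y ⬝ᵥ w) ^ 2)) :
    w ⬝ᵥ hessEval (Polynomial.aeval p (Polynomial.X * geomWeight K r)) y *ᵥ w
      ≤ -μ * (derivative (Polynomial.X * geomWeight K r)).eval (eval y p) := by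
  rw [dotProduct_hessEval_aeval_mulVec]
  exact quadForm_le_of_margin (Polynomial.eval_derivative_X_mul_geomWeight_nonneg r hK.ne' _)
    (Polynomial.eval_derivative_derivative_X_mul_geomWeight_le r hK hy₀ hyK) (by positivity)
    (sq_nonneg _) hQ ((div_le_iff₀ hμ).1 hr) hm

theorem quadForm_hessEval_aeval_le_neg (hK : 0 < K) (hμ : 0 < μ) (hμK : μ ≤ K)
    (hr : (B + μ) / μ ≤ 2 * r / K) (hy₀ : 0 ≤ eval y p) (hy : eval y p ≤ μ / 2)
    (hQ : w ⬝ᵥ hessEval p y *ᵥ w ≤ B)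
    (hm : μ ≤ max (-(w ⬝ᵥ hessEval p y *ᵥ w)) ((gradEval p y ⬝ᵥ w) ^ 2)) :
    w ⬝ᵥ hessEval (Polynomial.aeval p (Polynomial.X * geomWeight K r)) y *ᵥ w
      ≤ -(μ * (2 * (2 * r + 1) * (1 - μ / (2 * K)) ^ (2 * r))) := by
  refine (quadForm_hessEval_aeval_le_of_margin hK hμ hr hy₀ (by linarith) hQ hm).trans ?_
  rw [neg_mul, neg_le_neg_iff]
  exact mul_le_mul_of_nonneg_left
    (Polynomial.le_eval_derivative_X_mul_geomWeight r hK (by linarith) hy) hμ.le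

theorem quadForm_hessEval_aeval_le (hK : 0 < K) (hμ : 0 < μ) (hB : 0 ≤ B)
    (hr : (B + μ) / μ ≤ 2 * r / K) (hy₀ : 0 ≤ eval y p) (hyK : eval y p ≤ K)
    (hQ : w ⬝ᵥ hessEval p y *ᵥ w ≤ B)
    (hm : eval y p < μ → μ ≤ max (-(w ⬝ᵥ hessEval p y *ᵥ w)) ((gradEval p y ⬝ᵥ w) ^ 2)) :
    w ⬝ᵥ hessEval (Polynomial.aeval p (Polynomial.X * geomWeight K r)) y *ᵥ w
      ≤ B * (2 * (2 * r + 1) * ((1 - μ / (2 * K)) ^ (2 * r)) ^ 2) := by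
  have hd₁ := Polynomial.eval_derivative_X_mul_geomWeight_nonneg r hK.ne' (eval y p)
  by_cases hyμ : eval y p < μ
  · refine (quadForm_hessEval_aeval_le_of_margin hK hμ hr hy₀ hyK hQ (hm hyμ)).trans ?_
    nlinarith [show 0 ≤ B * (2 * (2 * r + 1) * ((1 - μ / (2 * K)) ^ (2 * r)) ^ 2) by positivity]
  · have hd₂ : (derivative (derivative (Polynomial.X * geomWeight K r))).eval (eval y p) ≤ 0 :=
      (Polynomial.eval_derivative_derivative_X_mul_geomWeight_le r hK hy₀ hyK).trans
        (by rw [neg_mul]; exact neg_nonpos.2 (by positivity))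
    rw [dotProduct_hessEval_aeval_mulVec]
    nlinarith [mul_nonpos_of_nonpos_of_nonneg hd₂ (sq_nonneg (gradEval p y ⬝ᵥ w)),
      mul_le_mul_of_nonneg_left hQ hd₁, mul_le_mul_of_nonneg_left
        (Polynomial.eval_derivative_X_mul_geomWeight_le r hK (not_lt.1 hyμ) hyK) hB]

theorem integral_quadForm_hessEval_aeval_neg {C : Set (Fin n → ℝ)} {γ : ℝ → Fin n → ℝ}
    (hγ : Continuous γ) (hγC : ∀ s ∈ Icc (0 : ℝ) 1, γ s ∈ C) {R s₀ : ℝ}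
    (hμ : 0 < μ) (hB : 0 ≤ B) (hs₀ : s₀ ∈ Icc (0 : ℝ) 1) (hK : max R μ < K)
    (hr : (B + μ) / μ ≤ 2 * r / K) (hsmall : B * (1 - μ / (2 * K)) ^ (2 * r) < μ * s₀)
    (hrange : ∀ y ∈ C, 0 ≤ eval y p ∧ eval y p ≤ R)
    (hQ : ∀ y ∈ C, w ⬝ᵥ hessEval p y *ᵥ w ≤ B)
    (hm : ∀ y ∈ C, eval y p < μ →
      μ ≤ max (-(w ⬝ᵥ hessEval p y *ᵥ w)) ((gradEval p y ⬝ᵥ w) ^ 2))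
    (hnear : ∀ s ∈ Icc 0 s₀, eval (γ s) p ≤ μ / 2) :
    ∫ s in (0 : ℝ)..1,
      w ⬝ᵥ hessEval (Polynomial.aeval p (Polynomial.X * geomWeight K r)) (γ s) *ᵥ w < 0 := by
  have hRK : R < K := (le_max_left R μ).trans_lt hK
  have hμK : μ < K := (le_max_right R μ).trans_lt hK
  have hK₀ : 0 < K := hμ.trans hμK
  have hY : 0 < (1 - μ / (2 * K)) ^ (2 * r) := by
    refine pow_pos ?_ _
    rw [sub_pos, div_lt_one (by positivity)]
    linarith
  refine intervalIntegral_neg_of_le (a := μ * (2 * (2 * r + 1) * (1 - μ / (2 * K)) ^ (2 * r)))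
    (b := B * (2 * (2 * r + 1) * ((1 - μ / (2 * K)) ^ (2 * r)) ^ 2))
    (continuous_const.dotProduct (((continuous_hessEval _).comp hγ).matrix_mulVec
      continuous_const)) hs₀ ?_ ?_ ?_
  · intro s hs
    have hsC := hγC s ⟨hs.1, hs.2.trans hs₀.2⟩
    exact quadForm_hessEval_aeval_le_neg hK₀ hμ hμK.le hr (hrange _ hsC).1 (hnear s hs)
      (hQ _ hsC) (hm _ hsC (by linarith [hnear s hs]))
  · intro s hs
    have hsC := hγC s ⟨hs₀.1.trans hs.1, hs.2⟩
    exact quadForm_hessEval_aeval_le hK₀ hμ hB hr (hrange _ hsC).1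
      ((hrange _ hsC).2.trans hRK.le) (hQ _ hsC) (hm _ hsC)
  · have hA : (0 : ℝ) < 2 * (2 * r + 1) := by positivity
    nlinarith [mul_pos hA hY, mul_nonneg hB hY.le, mul_nonneg (mul_nonneg hB hY.le) hs₀.1]

end SegmentEstimate

theorem stmt_12 {n m : ℕ} (g : Fin m → MvPolynomial (Fin n) ℝ)
    (C : Set (Fin n → ℝ)) (hCS : C ⊆ SolSet g) (hC : IsCompact C)
    (hqc : ∀ i, ∀ x ∈ C ∩ ZSet (g i), StrictlyQuasiconcaveAt (g i) x) :
    ∃ h : Polynomial ℝ, IsSOS1 (h - 1) ∧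
      ∀ i : Fin m, ∀ u x : Fin n → ℝ, u ∈ ZSet (g i) →
        (∀ s ∈ Set.Icc (0:ℝ) 1, (fun j => u j + s * (x j - u j)) ∈ C) →
        ∀ v : Fin n → ℝ, v ≠ 0 →
          v ⬝ᵥ (Matrix.of fun a b =>
              ∫ s in (0:ℝ)..1,
                eval (fun j => u j + s * (x j - u j))
                  (pderiv a (pderiv b (g i * Polynomial.aeval (g i) h)))) *ᵥ v < 0 := by
  obtain ⟨μ, hmargin, hμ⟩ := ((eventually_all.2 fun i => eventually_quasiconcavity_margin (g i)
    hC (fun y hy => hCS hy i) (hqc i)).and self_mem_nhdsWithin).exists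
  obtain ⟨B, hQ, hB⟩ := ((eventually_all.2 fun i => eventually_quadForm_hessEval_le (g i)
    hC).and (eventually_ge_atTop 0)).exists
  obtain ⟨R, hR⟩ := (eventually_all.2 fun i =>
    hC.eventually_forall_le (continuous_eval (g i)).continuousOn).exists
  obtain ⟨s₀, hnear, hs₀⟩ := ((eventually_all.2 fun i => hC.eventually_dist_lineMap_lt
    (continuous_eval (g i)).continuousOn (half_pos hμ)).and (Ioo_mem_nhdsGT one_pos)).exists
  obtain ⟨r, K, hK, hr, hsmall⟩ := exists_geomWeight_params (R := R) hμ hB hs₀.1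
  refine ⟨Polynomial.geomWeight K r, Polynomial.isSOS1_geomWeight_sub_one K r,
    fun i u x hu hseg v hv => dotProduct_mulVec_neg_of_norm_eq_one (fun w hw => ?_) hv⟩
  have huC : u ∈ C := by simpa using hseg 0 ⟨le_rfl, zero_le_one⟩
  have hxC : x ∈ C := by simpa using hseg 1 ⟨zero_le_one, le_rfl⟩
  rw [show g i * Polynomial.aeval (g i) (Polynomial.geomWeight K r)
      = Polynomial.aeval (g i) (Polynomial.X * Polynomial.geomWeight K r) by
    rw [map_mul, Polynomial.aeval_X]]
  refine (dotProduct_integral_hessEval_mulVec _ (by fun_prop) 0 1 w).trans_lt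
    (integral_quadForm_hessEval_aeval_neg (by fun_prop) hseg hμ hB (Ioo_subset_Icc_self hs₀) hK hr
      hsmall (fun y hy => ⟨hCS hy i, hR i y hy⟩) (fun y hy => hQ i y hy w hw)
      (fun y hy => hmargin i y hy w hw) fun s hs => ?_)
  have h := hnear i u huC x hxC s hs (by rw [lineMap_eq]; exact hseg s ⟨hs.1, hs.2.trans hs₀.2.le⟩)
  rw [lineMap_eq, Real.dist_eq, show eval u (g i) = 0 from hu, sub_zero] at h
  exact (le_abs_self _).trans h.le
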